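/- arXiv:2202.02007 — 3 statements merged into one kernel-verified Lean document; each statement's English description precedes it below -/
import Mathlib

section
/- Let P be a finite partially ordered set and let ω₁ and ω₂ be two linear extensions of P on the same underlying set. Then ω₂ can be obtained from ω₁ by a finite sequence of adjacent transpositions such that every intermediate total order is also a linear extension of P, and each transposition swaps two elements that are incomparable in P. -/
/-!
Bubble sort towards `ω₂`. Rank the elements by their position in `ω₂` and count the inversions
of a listing with respect to this rank. While some inversion remains, there is an adjacent one,
`a` directly before `b` with `b` before `a` in `ω₂`; then `a` and `b` are incomparable (neither
linear extension can put a larger element first), and swapping them gives a linear extension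
with one inversion fewer. A listing with no inversions is `ω₂` itself.
-/

/-- A listing of all elements of a finite poset compatible with the order:
a linear extension presented as a list. -/
def IsLinExtList {α : Type*} [PartialOrder α] (l : List α) : Prop :=
  l.Nodup ∧ (∀ x : α, x ∈ l) ∧ l.Pairwise fun a b => ¬ b < a

/-- One adjacent transposition: swap two consecutive entries that are
incomparable in the poset, with both the old and the new listings being linear
extensions. -/
def AdjSwapStep {α : Type*} [PartialOrder α] (l l' : List α) : Prop :=
  IsLinExtList l ∧ IsLinExtList l' ∧
    ∃ (l₁ l₂ : List α) (a b : α), ¬ a ≤ b ∧ ¬ b ≤ a ∧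
      l = l₁ ++ a :: b :: l₂ ∧ l' = l₁ ++ b :: a :: l₂

namespace List

variable {α β : Type*}

section invCount

variable [LinearOrder β] (key : α → β)

def invCount : List α → ℕ
  | [] => 0
  | a :: t => t.countP (fun b => key b < key a) + invCount t

variable {key}

theorem invCount_eq_zero_iff {l : List α} :
    invCount key l = 0 ↔ l.Pairwise fun a b => key a ≤ key b := by
  induction l with
  | nil => simp [invCount]
  | cons a t ih => simp [invCount, countP_eq_zero, pairwise_cons, ih]

theorem exists_adjacent_inversion {l : List α} (h : invCount key l ≠ 0) :
    ∃ (l₁ l₂ : List α) (a b : α), l = l₁ ++ a :: b :: l₂ ∧ key b < key a := by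
  have : Trans (fun a b : α => key a ≤ key b) (fun a b => key a ≤ key b)
      (fun a b => key a ≤ key b) := ⟨le_trans⟩
  rw [Ne, invCount_eq_zero_iff, ← isChain_iff_pairwise,
    isChain_iff_forall_rel_of_append_cons_cons] at h
  push Not at h
  obtain ⟨a, b, l₁, l₂, rfl, hba⟩ := h
  exact ⟨l₁, l₂, a, b, rfl, hba⟩

theorem invCount_swap {a b : α} (hba : key b < key a) (l₁ l₂ : List α) :
    invCount key (l₁ ++ b :: a :: l₂) + 1 = invCount key (l₁ ++ a :: b :: l₂) := by
  induction l₁ with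
  | nil => grind [invCount]
  | cons c l₁ ih =>
    simp only [cons_append, invCount, ((Perm.swap a b l₂).append_left l₁).countP_eq]
    omega

end invCount

theorem Nodup.pairwise_idxOf_le [DecidableEq α] {l : List α} (hl : l.Nodup) :
    l.Pairwise fun a b => l.idxOf a ≤ l.idxOf b := by
  rw [pairwise_iff_getElem]
  intro i j hi hj hij
  rw [hl.idxOf_getElem, hl.idxOf_getElem]
  exact hij.le

theorem Perm.eq_of_pairwise_idxOf_le [DecidableEq α] {l m : List α} (hp : l ~ m) (hm : m.Nodup)
    (h : l.Pairwise fun a b => m.idxOf a ≤ m.idxOf b) : l = m :=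
  hp.eq_of_pairwise (fun _ _ _ hb hab hba => ((idxOf_inj hb).1 (le_antisymm hba hab)).symm)
    h hm.pairwise_idxOf_le

end List

namespace IsLinExtList

variable {α : Type*} [PartialOrder α]

theorem perm {l m : List α} (hl : IsLinExtList l) (hm : IsLinExtList m) : l.Perm m :=
  (List.perm_ext_iff_of_nodup hl.1 hm.1).2 fun a => by simp [hl.2.1 a, hm.2.1 a]

theorem not_lt_of_idxOf_lt [DecidableEq α] {m : List α} (hm : IsLinExtList m) {x y : α}
    (hxy : m.idxOf x < m.idxOf y) : ¬ y < x := by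
  have hy := List.idxOf_lt_length_iff.2 (hm.2.1 y)
  have := List.pairwise_iff_getElem.1 hm.2.2 _ _ (hxy.trans hy) hy hxy
  rwa [List.getElem_idxOf, List.getElem_idxOf] at this

theorem swap {l₁ l₂ : List α} {a b : α} (h : IsLinExtList (l₁ ++ a :: b :: l₂))
    (hab : ¬ a < b) : IsLinExtList (l₁ ++ b :: a :: l₂) := by
  obtain ⟨hnd, hmem, hpw⟩ := h
  have hp : (l₁ ++ a :: b :: l₂).Perm (l₁ ++ b :: a :: l₂) :=
    (List.Perm.swap b a l₂).append_left l₁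
  refine ⟨hp.nodup hnd, fun x => hp.mem_iff.1 (hmem x), ?_⟩
  simp only [List.pairwise_append, List.pairwise_cons, List.mem_cons] at hpw ⊢
  grind

theorem adjSwapStep {l₁ l₂ : List α} {a b : α} (h : IsLinExtList (l₁ ++ a :: b :: l₂))
    (hab : ¬ a < b) (hne : a ≠ b) : AdjSwapStep (l₁ ++ a :: b :: l₂) (l₁ ++ b :: a :: l₂) := by
  have hba : ¬ b < a := by
    have := h.2.2
    simp only [List.pairwise_append, List.pairwise_cons, List.mem_cons] at this
    grind
  exact ⟨h, h.swap hab, l₁, l₂, a, b, fun h => hab (h.lt_of_ne hne),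
    fun h => hba (h.lt_of_ne hne.symm), rfl, rfl⟩

end IsLinExtList

theorem stmt3_general {α : Type*} [PartialOrder α] (ω₁ ω₂ : List α)
    (h₁ : IsLinExtList ω₁) (h₂ : IsLinExtList ω₂) :
    Relation.ReflTransGen AdjSwapStep ω₁ ω₂ := by
  classical
  induction hn : List.invCount (ω₂.idxOf ·) ω₁ using Nat.strong_induction_on generalizing ω₁ with
  | _ n ih =>
  rcases eq_or_ne n 0 with rfl | hn0
  · rw [(h₁.perm h₂).eq_of_pairwise_idxOf_le h₂.1 (List.invCount_eq_zero_iff.1 hn)]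
  · obtain ⟨l₁, l₂, a, b, rfl, hba⟩ := List.exists_adjacent_inversion (hn ▸ hn0)
    have hstep := h₁.adjSwapStep (h₂.not_lt_of_idxOf_lt hba) (by rintro rfl; exact hba.false)
    have hfewer := List.invCount_swap (key := (ω₂.idxOf ·)) hba l₁ l₂
    exact .head hstep (ih _ (by omega) _ hstep.2.1 rfl)

/-- Any two linear extensions of a finite poset are related by a finite sequence
of adjacent transpositions, each swapping two consecutive incomparable elements,
with every intermediate listing again a linear extension. -/
theorem stmt3 {α : Type*} [Fintype α] [PartialOrder α] (ω₁ ω₂ : List α)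
    (h₁ : IsLinExtList ω₁) (h₂ : IsLinExtList ω₂) :
    Relation.ReflTransGen AdjSwapStep ω₁ ω₂ :=
  stmt3_general ω₁ ω₂ h₁ h₂
end

section
/- Let G be a finite graph in which every vertex has degree 4 or degree 1, with at least one degree-1 vertex, and suppose G is connected. Then G admits a spanning subforest S such that each component of S is a tree containing exactly one degree-1 vertex of G and S spans all degree-4 vertices (i.e., a clearing forest exists). -/
/-!
Fix a boundary vertex `r` and let every crossing `v` point to a neighbour `p v` strictly closer
to `r`; the forest consists of the edges `v — p v`. The distance to `r` strictly decreases along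
these edges, so they contain no cycle, and following them from a crossing ends at a boundary
vertex. That boundary vertex is `r`: a boundary vertex `u ≠ r` whose only neighbour is `v` is
farther from `r` than `v`, so it cannot be `p v`. Hence every other boundary vertex is isolated.
-/

open SimpleGraph

namespace SimpleGraph

variable {V : Type*} {G : SimpleGraph V}

lemma Connected.exists_adj_dist_lt (hG : G.Connected) {v r : V} (hv : v ≠ r) :
    ∃ x, G.Adj v x ∧ G.dist x r < G.dist v r := by
  obtain ⟨w, hw⟩ := hG.exists_walk_length_eq_dist v r
  obtain ⟨x, hx, t, rfl⟩ := Walk.exists_eq_cons_of_ne hv w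
  have := dist_le t
  rw [Walk.length_cons] at hw
  exact ⟨x, hx, by omega⟩

lemma IsIsolated.eq_of_reachable {u w : V} (hu : G.IsIsolated u) (huw : G.Reachable u w) :
    u = w := by
  obtain ⟨p⟩ := huw
  cases p with
  | nil => rfl
  | cons h _ => exact absurd h (hu _)

lemma eq_of_degree_eq_one_of_adj {u x y : V} [Fintype (G.neighborSet u)] (hu : G.degree u = 1)
    (hx : G.Adj u x) (hy : G.Adj u y) : x = y :=
  (degree_eq_one_iff_existsUnique_adj.mp hu).unique hx hy

lemma Connected.dist_lt_of_adj_of_degree_eq_one (hG : G.Connected) {u v r : V}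
    [Fintype (G.neighborSet u)] (hur : u ≠ r) (hu : G.degree u = 1) (hvu : G.Adj v u) :
    G.dist v r < G.dist u r := by
  obtain ⟨x, hux, hx⟩ := hG.exists_adj_dist_lt hur
  rwa [eq_of_degree_eq_one_of_adj hu hux hvu.symm] at hx

def parentGraph (P : V → Prop) (f : V → V) : SimpleGraph V :=
  fromRel fun a b => P a ∧ b = f a

section parentGraph

variable {P : V → Prop} {f : V → V}

lemma parentGraph_le (h : ∀ v, P v → G.Adj v (f v)) : parentGraph P f ≤ G := by
  rintro a b ⟨-, ⟨ha, rfl⟩ | ⟨hb, rfl⟩⟩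
  · exact h a ha
  · exact (h b hb).symm

variable (φ : V → ℕ) (hφ : ∀ v, P v → φ (f v) < φ v)
include hφ

lemma parentGraph_adj_eq_of_le {m x : V} (hadj : (parentGraph P f).Adj m x) (hx : φ x ≤ φ m) :
    x = f m := by
  obtain ⟨-, ⟨-, rfl⟩ | ⟨hPx, rfl⟩⟩ := hadj
  · rfl
  · exact absurd (hφ x hPx) (by omega)

/-- On a cycle, both neighbours of a vertex of maximal potential would have to be its parent. -/
lemma parentGraph_isAcyclic [DecidableEq V] : (parentGraph P f).IsAcyclic := by
  intro v c hc
  obtain ⟨m, hm, hmax⟩ := c.support.toFinset.exists_max_image φ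
    ⟨v, List.mem_toFinset.mpr c.start_mem_support⟩
  rw [List.mem_toFinset] at hm
  set c' := c.rotate m hm
  have hc' : c'.IsCycle := hc.rotate hm
  have hparent : ∀ x ∈ c'.support, (parentGraph P f).Adj m x → x = f m := fun x hx hadj =>
    parentGraph_adj_eq_of_le φ hφ hadj
      (hmax x (List.mem_toFinset.mpr ((c.mem_support_rotate_iff m hm).mp hx)))
  apply hc'.snd_ne_penultimate
  rw [hparent c'.snd (c'.getVert_mem_support 1) (c'.adj_snd hc'.not_nil),
    hparent c'.penultimate (c'.getVert_mem_support _) (c'.adj_penultimate hc'.not_nil).symm]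

lemma parentGraph_reachable {r : V} (hstep : ∀ v, P v → P (f v) ∨ f v = r) {v : V} (hv : P v) :
    (parentGraph P f).Reachable v r := by
  induction hn : φ v using Nat.strong_induction_on generalizing v with
  | _ n ih =>
    have hadj : (parentGraph P f).Adj v (f v) :=
      ⟨fun h => (hφ v hv).ne (congrArg φ h.symm), Or.inl ⟨hv, rfl⟩⟩
    rcases hstep v hv with hfv | hfv
    · exact hadj.reachable.trans (ih _ (hn ▸ hφ v hv) hfv rfl)
    · exact hfv ▸ hadj.reachable

end parentGraph

end SimpleGraph

/-- Every finite connected graph whose vertices have degree 4 (crossings) or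
degree 1 (boundary vertices), with at least one degree-1 vertex, admits a
clearing forest: a subforest `S` spanning all 4-valent vertices in which each
component is a tree containing exactly one degree-1 vertex (its root). -/
theorem stmt9 {V : Type*} [Fintype V] [DecidableEq V]
    (G : SimpleGraph V) [DecidableRel G.Adj]
    (hdeg : ∀ v : V, G.degree v = 4 ∨ G.degree v = 1)
    (hconn : G.Connected) (hbdy : ∃ v : V, G.degree v = 1) :
    ∃ S : SimpleGraph V, S ≤ G ∧ S.IsAcyclic ∧
      (∃ r : V → V,
        ∀ v : V, G.degree v = 4 → S.Reachable v (r v) ∧ G.degree (r v) = 1) ∧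
      (∀ u w : V, G.degree u = 1 → G.degree w = 1 → S.Reachable u w → u = w) := by
  obtain ⟨r, hr⟩ := hbdy
  have hne : ∀ v, G.degree v = 4 → v ≠ r := by rintro v hv rfl; omega
  choose! p hadj hdist using fun v (hv : v ≠ r) => hconn.exists_adj_dist_lt hv
  have hφ : ∀ v, G.degree v = 4 → G.dist (p v) r < G.dist v r := fun v hv => hdist v (hne v hv)
  have hroot : ∀ v, G.degree v = 4 → G.degree (p v) = 1 → p v = r := by
    intro v hv hpv
    by_contra hpr
    have := hconn.dist_lt_of_adj_of_degree_eq_one hpr hpv (hadj v (hne v hv))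
    have := hφ v hv
    omega
  let S := parentGraph (G.degree · = 4) p
  have hiso : ∀ u, G.degree u = 1 → u ≠ r → S.IsIsolated u := by
    rintro u hu hur x ⟨-, ⟨hu4, -⟩ | ⟨hx4, rfl⟩⟩
    · omega
    · exact hur (hroot x hx4 hu)
  refine ⟨S, parentGraph_le fun v hv => hadj v (hne v hv), parentGraph_isAcyclic (G.dist · r) hφ,
    ⟨fun _ => r, fun v hv => ⟨parentGraph_reachable (G.dist · r) hφ
      (fun v hv => (hdeg (p v)).imp_right (hroot v hv)) hv, hr⟩⟩, ?_⟩
  intro u w hu hw huw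
  by_cases hur : u = r
  · by_cases hwr : w = r
    · exact hur.trans hwr.symm
    · exact ((hiso w hw hwr).eq_of_reachable huw.symm).symm
  · exact (hiso u hu hur).eq_of_reachable huw
end

section
/- Let G be a finite graph whose vertices all have degree 4 except for univalent boundary vertices. If v is a 4-valent vertex with at least two boundary-adjacent edges e and d, and S is a clearing forest containing e as the outgoing edge of v, then (S \ {e}) ∪ {d} is also a clearing forest (each component remains a tree with exactly one univalent root, spanning all 4-valent vertices). -/
/-!
Since `x` and `y` are univalent with the same neighbour `v`, the transposition of `x` and `y` is
an automorphism of `G`. In `S` the vertex `x` is a leaf hanging off `v`, while `y` is isolated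
(otherwise `v` would reach two roots), so this automorphism carries `S` to
`(S \ {vx}) ∪ {vy}`; and being a clearing forest is invariant under graph isomorphisms.
-/

open SimpleGraph

/-- `S` is a clearing forest for `G`: a subforest of `G` such that each
component is a tree containing exactly one univalent vertex of `G` (its root);
in particular every vertex (so in particular every 4-valent vertex, which `S`
must span) reaches a unique univalent vertex in `S`. -/
def IsClearingForest {V : Type*} [Fintype V] (G : SimpleGraph V)
    [DecidableRel G.Adj] (S : SimpleGraph V) : Prop :=
  S ≤ G ∧ S.IsAcyclic ∧
    ∀ v : V, ∃! u : V, S.Reachable v u ∧ G.degree u = 1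

namespace SimpleGraph

variable {V : Type*}

def Iso.swapOfNeighborSetEq (G : SimpleGraph V) [DecidableEq V] {x y : V}
    (h : G.neighborSet x = G.neighborSet y) : G ≃g G where
  toEquiv := Equiv.swap x y
  map_rel_iff' {a b} := by
    have hadj : ∀ z, G.Adj x z ↔ G.Adj y z := fun z => Set.ext_iff.mp h z
    simp only [Equiv.swap_apply_def]
    split_ifs <;> subst_vars <;> grind [adj_comm]

theorem neighborSet_eq_singleton_of_degree_eq_one {G : SimpleGraph V} {x v : V}
    [Fintype (G.neighborSet x)] (hx : G.degree x = 1) (hxv : G.Adj x v) :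
    G.neighborSet x = {v} := by
  obtain ⟨w, -, hw⟩ := degree_eq_one_iff_existsUnique_adj.mp hx
  ext z
  simp only [mem_neighborSet, Set.mem_singleton_iff]
  exact ⟨fun hz => (hw z hz).trans (hw v hxv).symm, fun hz => hz ▸ hxv⟩

theorem comap_swap_eq_deleteEdges_sup_fromEdgeSet [DecidableEq V] {S : SimpleGraph V} {x y v : V}
    (hx : S.neighborSet x = {v}) (hy : S.neighborSet y = ∅) :
    S.comap (Equiv.swap x y) = S.deleteEdges {s(v, x)} ⊔ fromEdgeSet {s(v, y)} := by
  have hxz : ∀ z, S.Adj x z ↔ z = v := fun z => Set.ext_iff.mp hx z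
  have hyz : ∀ z, ¬ S.Adj y z := fun z hz => (Set.ext_iff.mp hy z).mp hz
  have hzx : ∀ z, S.Adj z x ↔ z = v := fun z => (S.adj_comm z x).trans (hxz z)
  have hzy : ∀ z, ¬ S.Adj z y := fun z hz => hyz z hz.symm
  have hvx : v ≠ x := ((hzx v).mpr rfl).ne
  ext a b
  simp only [comap_adj, Equiv.swap_apply_def, sup_adj, deleteEdges_adj, fromEdgeSet_adj,
    Set.mem_singleton_iff, Sym2.eq_iff]
  split_ifs <;> subst_vars <;> grind

end SimpleGraph

section

variable {V W : Type*} [Fintype V] [Fintype W] {G : SimpleGraph V} {G' : SimpleGraph W}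
  [DecidableRel G.Adj] [DecidableRel G'.Adj]

theorem IsClearingForest.comap (φ : G ≃g G') {S : SimpleGraph W}
    (hS : IsClearingForest G' S) : IsClearingForest G (S.comap φ) := by
  obtain ⟨hle, hacyc, hroot⟩ := hS
  let ψ : S.comap φ ≃g S := Iso.comap φ.toEquiv S
  refine ⟨fun a b h => φ.map_adj_iff.mp (hle h), ψ.isAcyclic_iff.mpr hacyc, fun w => ?_⟩
  refine (φ.toEquiv.existsUnique_congr fun u => ?_).mpr (hroot (φ w))
  exact and_congr ψ.reachable_iff.symm (by rw [← φ.degree_eq]; rfl)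

theorem IsClearingForest.eq_of_reachable {S : SimpleGraph V} (hS : IsClearingForest G S)
    {w x y : V} (hwx : S.Reachable w x) (hwy : S.Reachable w y)
    (hx : G.degree x = 1) (hy : G.degree y = 1) : x = y :=
  (hS.2.2 w).unique ⟨hwx, hx⟩ ⟨hwy, hy⟩

end

theorem stmt17_general {V : Type*} [Fintype V] [DecidableEq V]
    (G : SimpleGraph V) [DecidableRel G.Adj]
    (S : SimpleGraph V) (hS : IsClearingForest G S)
    (v x y : V)
    (hx : G.degree x = 1) (hy : G.degree y = 1) (hxy : x ≠ y)
    (hvx : G.Adj v x) (hvy : G.Adj v y) (hSvx : S.Adj v x) :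
    IsClearingForest G
      ((S.deleteEdges {s(v, x)}) ⊔ SimpleGraph.fromEdgeSet {s(v, y)}) := by
  have hGx := neighborSet_eq_singleton_of_degree_eq_one hx hvx.symm
  have hGy := neighborSet_eq_singleton_of_degree_eq_one hy hvy.symm
  have hSx : S.neighborSet x = {v} :=
    ((neighborSet_mono hS.1 x).trans hGx.le).antisymm (Set.singleton_subset_iff.mpr hSvx.symm)
  have hSy : S.neighborSet y = ∅ := by
    refine Set.eq_empty_of_forall_notMem fun z hyz => hxy ?_
    have hzv : z = v := hGy.subset (hS.1 hyz)
    subst hzv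
    exact hS.eq_of_reachable hSvx.reachable hyz.symm.reachable hx hy
  rw [← comap_swap_eq_deleteEdges_sup_fromEdgeSet hSx hSy]
  exact hS.comap (Iso.swapOfNeighborSetEq G (hGx.trans hGy.symm))

/-- Let `G` be a finite graph whose vertices have degree 4 or degree 1
(boundary vertices).  If `v` is a 4-valent vertex with two distinct
boundary-adjacent edges `e = vx` and `d = vy` (`x`, `y` univalent), and `S` is
a clearing forest containing `e` (necessarily as the outgoing edge of `v`),
then replacing `e` by `d` in `S` again yields a clearing forest. -/
theorem stmt17 {V : Type*} [Fintype V] [DecidableEq V]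
    (G : SimpleGraph V) [DecidableRel G.Adj]
    (hdeg : ∀ v : V, G.degree v = 4 ∨ G.degree v = 1)
    (S : SimpleGraph V) (hS : IsClearingForest G S)
    (v x y : V) (hv : G.degree v = 4)
    (hx : G.degree x = 1) (hy : G.degree y = 1) (hxy : x ≠ y)
    (hvx : G.Adj v x) (hvy : G.Adj v y) (hSvx : S.Adj v x) :
    IsClearingForest G
      ((S.deleteEdges {s(v, x)}) ⊔ SimpleGraph.fromEdgeSet {s(v, y)}) :=
  stmt17_general G S hS v x y hx hy hxy hvx hvy hSvx
end
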